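/- arXiv:2302.00977 — 3 statements merged into one kernel-verified Lean document; each statement's English description precedes it below -/
import Mathlib

section
/- In an associative algebra, suppose elements (organized into formal series) h(u) = 1 + Σ_{r≥1} h^{(r)} u^{-r} and e(v) = Σ_{r≥1} e^{(r)} v^{-r} satisfy the relation [h(u), e(v)] = h(u)·(e(u) - e(v))/(u - v) as formal series identities. Then setting v = u + 1 (with formal re-expansion) yields e(u+1)·h(u) = h(u)·e(u), and moreover e(v)·h(u)^{-1} = h(u)^{-1}·((u-v)/(u-v+1)·e(v) + 1/(u-v+1)·e(u+1)). -/
open Finset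

/-- Coefficient of `u^{-r} v^{-s}` in the divided difference `(g(u) - g(v))/(u - v)`
of a series `g(u) = Σ_{k≥1} g^{(k)} u^{-k}`. -/
noncomputable def dd {A : Type*} [Ring A] (g : ℕ → A) (r s : ℕ) : A :=
  if r = 0 ∨ s = 0 then 0 else -g (r + s - 1)

/-- Coefficient of `u^{-n}` in `g(u + q)`. -/
noncomputable def shiftC {A : Type*} [Ring A] [Algebra ℚ A] (q : ℚ) (g : ℕ → A) (n : ℕ) : A :=
  ∑ r ∈ range (n + 1),
    (((-1 : ℚ) ^ (n - r)) * ((n - 1).choose (n - r) : ℚ) * q ^ (n - r)) • g r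

/-- Coefficient of `u^{-n}` in the product of two one-variable series. -/
noncomputable def convo {A : Type*} [Ring A] (a b : ℕ → A) (n : ℕ) : A :=
  ∑ i ∈ range (n + 1), a i * b (n - i)

/-! Read coefficientwise, the relation says `h_r e_s = e_s h_r - Σ_{i<r} h_i e_{r-1-i+s}` for
`s ≥ 1`. Feeding this back into itself (induction on `r`, with `s` free) moves every `h` to the
right, and the coefficients that accumulate are iterated forward differences of `e` in its index:
`Σ_{i<r} h_i e_{r-1-i+s} = Σ_{m<r} (Δ^m e)(s) h_{r-1-m}`.
By Newton's formula, `(Δ^m e)(1)` is the coefficient of `u^{-m-1}` in `e(u+1)`, and similarly for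
the divided difference at `u+1`. At `s = 1` the identity is `h(u) e(u) = e(u+1) h(u)`; for
general `s` it says `h(u) e_s = X_s(u) h(u)`, where `X_s(u)` is the coefficient of `v^{-s}` in
`e(v) + (e(u+1) - e(v))/(u+1-v)`, and conjugating by the unit `h(u)` gives the second identity. -/

open PowerSeries

section Commutation

variable {A : Type*} [Ring A]

theorem convo_eq_mul_add_sum (a b : ℕ → A) (n : ℕ) :
    convo a b n = a 0 * b n + ∑ m ∈ range n, a (m + 1) * b (n - 1 - m) := by
  rw [convo, sum_range_succ', add_comm]
  congr 1
  refine sum_congr rfl fun m _ => ?_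
  congr 2
  omega

theorem coeff_mk_mul_mk (a b : ℕ → A) (n : ℕ) : coeff n (mk a * mk b) = convo a b n := by
  simp [coeff_mul, Nat.sum_antidiagonal_eq_sum_range_succ_mk, convo]

theorem sum_mul_dd_eq_neg_sum (h e : ℕ → A) (r : ℕ) {s : ℕ} (hs : 1 ≤ s) :
    ∑ i ∈ range (r + 1), h i * dd e (r - i) s =
      -∑ i ∈ range r, h i * e (r - 1 - i + s) := by
  rw [sum_range_succ, ← sum_neg_distrib]
  simp only [Nat.sub_self, dd, true_or, if_true, mul_zero, add_zero]
  refine sum_congr rfl fun i hi => ?_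
  have hi : i < r := mem_range.mp hi
  rw [if_neg (by omega), mul_neg]
  congr 3
  omega

theorem mul_eq_mul_sub_sum_of_rel {h e : ℕ → A}
    (rel : ∀ r s, h r * e s - e s * h r = ∑ i ∈ range (r + 1), h i * dd e (r - i) s)
    (r s : ℕ) (hs : 1 ≤ s) :
    h r * e s = e s * h r - ∑ i ∈ range r, h i * e (r - 1 - i + s) := by
  have hrs := rel r s
  rw [sum_mul_dd_eq_neg_sum h e r hs, sub_eq_iff_eq_add] at hrs
  rw [hrs, neg_add_eq_sub]

theorem fwdDiff_iter_succ_apply (f : ℕ → A) (m s : ℕ) :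
    (fwdDiff 1)^[m + 1] f s = (fwdDiff 1)^[m] f (s + 1) - (fwdDiff 1)^[m] f s := by
  rw [Function.iterate_succ_apply', fwdDiff]

theorem sum_mul_shift_eq_sum_fwdDiff_mul {h e : ℕ → A}
    (comm : ∀ r s, 1 ≤ s → h r * e s = e s * h r - ∑ i ∈ range r, h i * e (r - 1 - i + s))
    (r : ℕ) {s : ℕ} (hs : 1 ≤ s) :
    ∑ i ∈ range r, h i * e (r - 1 - i + s) =
      ∑ m ∈ range r, (fwdDiff 1)^[m] e s * h (r - 1 - m) := by
  induction r generalizing s with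
  | zero => simp
  | succ r ih =>
    have hT : ∑ i ∈ range (r + 1), h i * e (r + 1 - 1 - i + s)
        = ∑ i ∈ range r, h i * e (r - 1 - i + (s + 1)) + h r * e s := by
      rw [sum_range_succ, Nat.add_sub_cancel, Nat.sub_self, zero_add]
      congr 1
      refine sum_congr rfl fun i hi => ?_
      have hi : i < r := mem_range.mp hi
      congr 2
      omega
    have hR : ∑ m ∈ range (r + 1), (fwdDiff 1)^[m] e s * h (r + 1 - 1 - m)
        = ∑ m ∈ range r, (fwdDiff 1)^[m] e (s + 1) * h (r - 1 - m)
          - ∑ m ∈ range r, (fwdDiff 1)^[m] e s * h (r - 1 - m) + e s * h r := by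
      rw [sum_range_succ', ← sum_sub_distrib]
      simp only [fwdDiff_iter_succ_apply, sub_mul, Function.iterate_zero_apply,
        Nat.add_sub_cancel, Nat.sub_zero]
      congr 1
      refine sum_congr rfl fun m _ => ?_
      rw [show r - (m + 1) = r - 1 - m by omega]
    rw [hT, hR, comm r s hs, ih (by omega), ih hs]
    abel

end Commutation

section Shift

variable {A : Type*} [Ring A] [Algebra ℚ A]

theorem shiftC_one_zero (g : ℕ → A) : shiftC 1 g 0 = g 0 := by
  simp [shiftC]

theorem shiftC_one_succ (g : ℕ → A) (m : ℕ) : shiftC 1 g (m + 1) = (fwdDiff 1)^[m] g 1 := by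
  rw [shiftC, sum_range_succ', fwdDiff_iter_eq_sum_shift]
  simp only [Nat.add_sub_cancel, Nat.sub_zero, Nat.choose_succ_self, Nat.cast_zero, mul_zero,
    zero_mul, zero_smul, add_zero]
  refine sum_congr rfl fun k hk => ?_
  have hk : k ≤ m := Nat.lt_succ_iff.mp (mem_range.mp hk)
  rw [show m + 1 - (k + 1) = m - k by omega, Nat.choose_symm hk, one_pow, mul_one, smul_eq_mul,
    mul_one, add_comm 1 k, ← Int.cast_smul_eq_zsmul ℚ]
  push_cast
  rfl

theorem shiftC_one_dd_succ (e : ℕ → A) (m : ℕ) {s : ℕ} (hs : 1 ≤ s) :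
    shiftC 1 (fun t => dd e t s) (m + 1) = -(fwdDiff 1)^[m] e s := by
  simp only [shiftC_one_succ, fwdDiff_iter_eq_sum_shift, ← sum_neg_distrib, ← smul_neg]
  refine sum_congr rfl fun k _ => ?_
  rw [dd, if_neg (by omega), smul_eq_mul, mul_one, show 1 + k + s - 1 = s + k by omega]

theorem convo_shiftC_one_eq_convo {h e : ℕ → A} (he0 : e 0 = 0)
    (rel : ∀ r s, h r * e s - e s * h r = ∑ i ∈ range (r + 1), h i * dd e (r - i) s)
    (n : ℕ) :
    convo (shiftC 1 e) h n = convo h e n := by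
  have hR : convo h e n = ∑ i ∈ range n, h i * e (n - 1 - i + 1) := by
    rw [convo, sum_range_succ, Nat.sub_self, he0, mul_zero, add_zero]
    refine sum_congr rfl fun i hi => ?_
    rw [show n - 1 - i + 1 = n - i by have := mem_range.mp hi; omega]
  rw [hR, sum_mul_shift_eq_sum_fwdDiff_mul (mul_eq_mul_sub_sum_of_rel rel) n le_rfl,
    convo_eq_mul_add_sum, shiftC_one_zero, he0, zero_mul, zero_add]
  simp only [shiftC_one_succ]

theorem mul_eq_convo_of_rel {h e : ℕ → A} (he0 : e 0 = 0)
    (rel : ∀ r s, h r * e s - e s * h r = ∑ i ∈ range (r + 1), h i * dd e (r - i) s)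
    (r s : ℕ) :
    h r * e s =
      convo (fun a => (if a = 0 then e s else 0) + shiftC 1 (fun t => dd e t s) a) h r := by
  rcases Nat.eq_zero_or_pos s with rfl | hs
  · simp [he0, convo, shiftC, dd]
  · rw [convo_eq_mul_add_sum]
    have hdd0 : dd e 0 s = 0 := if_pos (Or.inl rfl)
    simp only [shiftC_one_zero, shiftC_one_dd_succ e _ hs, hdd0, if_true, add_zero,
      Nat.succ_ne_zero, if_false, zero_add, neg_mul, sum_neg_distrib]
    rw [mul_eq_mul_sub_sum_of_rel rel r s hs,
      sum_mul_shift_eq_sum_fwdDiff_mul (mul_eq_mul_sub_sum_of_rel rel) r hs, sub_eq_add_neg]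

end Shift

theorem stmt2_general {A : Type*} [Ring A] [Algebra ℚ A]
    (h e hinv : ℕ → A) (he0 : e 0 = 0)
    (hinv1 : ∀ n, convo h hinv n = if n = 0 then 1 else 0)
    (hinv2 : ∀ n, convo hinv h n = if n = 0 then 1 else 0)
    (rel : ∀ r s, h r * e s - e s * h r
      = ∑ i ∈ range (r + 1), h i * dd e (r - i) s) :
    (∀ n, convo (shiftC 1 e) h n = convo h e n) ∧
    (∀ r s, e s * hinv r
      = ∑ i ∈ range (r + 1), hinv i *
          ((if r - i = 0 then e s else 0) + shiftC 1 (fun a => dd e a s) (r - i))) := by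
  refine ⟨convo_shiftC_one_eq_convo he0 rel, fun r s => ?_⟩
  let H : A⟦X⟧ˣ := ⟨mk h, mk hinv, by ext n; simp [coeff_mk_mul_mk, hinv1, coeff_one],
    by ext n; simp [coeff_mk_mul_mk, hinv2, coeff_one]⟩
  have hconj : SemiconjBy (H : A⟦X⟧) (C (e s))
      (mk fun a => (if a = 0 then e s else 0) + shiftC 1 (fun t => dd e t s) a) := by
    ext n
    rw [coeff_mul_C, coeff_mk_mul_mk, coeff_mk, mul_eq_convo_of_rel he0 rel]
  simpa [H, coeff_C_mul, coeff_mk_mul_mk, convo] using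
    (congrArg (coeff r) hconj.units_inv_symm_left).symm

/-- In an associative ℚ-algebra, if `h(u) = 1 + Σ_{r≥1} h^{(r)} u^{-r}`
(with inverse `h(u)^{-1}` encoded by `hinv`) and `e(v) = Σ_{r≥1} e^{(r)} v^{-r}`
satisfy `[h(u), e(v)] = h(u)·(e(u) - e(v))/(u - v)`, then
`e(u+1)·h(u) = h(u)·e(u)`, and
`e(v)·h(u)^{-1} = h(u)^{-1}·( (u-v)/(u-v+1)·e(v) + 1/(u-v+1)·e(u+1) )`; the right-hand
side of the latter is the series
`h(u)^{-1}·( e(v) + (e(u+1) - e(v))/((u+1) - v) )`, whose coefficients are written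
below via `dd` and the substitution `u ↦ u+1`. -/
theorem stmt2 {A : Type*} [Ring A] [Algebra ℚ A]
    (h e hinv : ℕ → A) (hh0 : h 0 = 1) (he0 : e 0 = 0)
    (hinv1 : ∀ n, convo h hinv n = if n = 0 then 1 else 0)
    (hinv2 : ∀ n, convo hinv h n = if n = 0 then 1 else 0)
    (rel : ∀ r s, h r * e s - e s * h r
      = ∑ i ∈ range (r + 1), h i * dd e (r - i) s) :
    (∀ n, convo (shiftC 1 e) h n = convo h e n) ∧
    (∀ r s, e s * hinv r
      = ∑ i ∈ range (r + 1), hinv i *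
          ((if r - i = 0 then e s else 0) + shiftC 1 (fun a => dd e a s) (r - i))) :=
  stmt2_general h e hinv he0 hinv1 hinv2 rel
end

section
/- Let A be an associative algebra and h₁(u), e(u) formal series over A satisfying [h₁(u), e(v)] = h₁(u)(e(u)-e(v))/(u-v), and suppose h₂(u) = z(u)·h₁(u-1/2)·h₁(u-1)^{-1} where z(u) is a formal series with coefficients central in A. Then [h₂(u), e(v)] = h₂(u)·((e(u)-e(v))/(u-v) - (e(u-1/2)-e(v))/(u-v-1/2)). -/
/-!
Write `x = u⁻¹`. The substitution `u ↦ u + q` acts on `A⟦x⟧` as the ring endomorphism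
`x ↦ x / (1 + q x)`, which fixes `A` because the image of `x` has rational, hence central,
coefficients. Applying it to the defining relation gives the commutators of `e_s` with
`h₁(u - 1/2)` and `h₁(u - 1)`, and conjugating by `h₁(u - 1)⁻¹` reduces the claim to
`h₁(u-1) (Δ(u-1/2) - Δ(u-1)) = (Δ(u) - Δ(u-1/2)) h₁(u-1)`, where `Δ(u)` is the `v^{-s}`
coefficient of `(e(u) - e(v))/(u - v)`. Since `Δ(u)` is a series in the `e_k`, its commutator
with `h₁(u-1)` is a double series; after evaluating a second variable at `a = (u + q)⁻¹` it
telescopes thanks to `a - c = (-1 - q) a c` for `c = (u - 1)⁻¹`.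
-/

open Finset

open PowerSeries

theorem shiftC_zero {A : Type*} [Ring A] [Algebra ℚ A] (g : ℕ → A) : shiftC 0 g = g := by
  funext n
  rw [shiftC, sum_eq_single_of_mem n (self_mem_range_succ n) fun r hr hrn => by
    rw [zero_pow (by simp at hr; omega), mul_zero, zero_smul]]
  simp

theorem commutator_mul_inv_eq {A : Type*} [Ring A] {y x x' a d₀ d₁ d₂ : A} (hxx' : x * x' = 1)
    (hx'x : x' * x = 1) (hy : y * a - a * y = y * d₁) (hx : x * a - a * x = x * d₂)
    (hkey : x * (d₁ - d₂) = (d₀ - d₁) * x) :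
    y * x' * a - a * (y * x') = y * x' * (d₀ - d₁) := by
  have hx' : x' * a - a * x' = -(d₂ * x') := by
    calc x' * a - a * x' = x' * a * (x * x') - (x' * x) * a * x' := by
          rw [hxx', hx'x, mul_one, one_mul]
      _ = -(x' * (x * a - a * x) * x') := by noncomm_ring
      _ = -(d₂ * x') := by rw [hx, ← mul_assoc, hx'x, one_mul]
  have hkey' : (d₁ - d₂) * x' = x' * (d₀ - d₁) := by
    calc (d₁ - d₂) * x' = x' * (x * (d₁ - d₂)) * x' := by rw [← mul_assoc, hx'x, one_mul]
      _ = x' * (d₀ - d₁) := by rw [hkey, mul_assoc, mul_assoc, hxx', mul_one]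
  calc y * x' * a - a * (y * x') = y * (x' * a - a * x') + (y * a - a * y) * x' := by noncomm_ring
    _ = y * x' * (d₀ - d₁) := by rw [hx', hy, mul_assoc y x', ← hkey']; noncomm_ring

namespace PowerSeries

section CentralEvaluation

variable {A : Type*} [Ring A]

theorem coeff_mul_eq_sum_range (φ ψ : A⟦X⟧) (n : ℕ) :
    coeff n (φ * ψ) = ∑ i ∈ range (n + 1), coeff i φ * coeff (n - i) ψ := by
  rw [coeff_mul, Nat.sum_antidiagonal_eq_sum_range_succ_mk]

theorem commute_of_coeff_commute {φ : A⟦X⟧} (hφ : ∀ n a, Commute (coeff n φ) a) (ψ : A⟦X⟧) :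
    Commute φ ψ :=
  ext fun n => by
    rw [coeff_mul, coeff_mul, ← Nat.sum_antidiagonal_swap]
    exact sum_congr rfl fun i _ => (hφ i.2 _).eq

theorem coeff_mul_eq_of_coeff_eq {φ φ' ψ ψ' : A⟦X⟧} {n : ℕ}
    (hφ : ∀ k ≤ n, coeff k φ = coeff k φ') (hψ : ∀ k ≤ n, coeff k ψ = coeff k ψ') :
    coeff n (φ * ψ) = coeff n (φ' * ψ') := by
  rw [coeff_mul, coeff_mul]
  refine sum_congr rfl fun i hi => ?_
  rw [HasAntidiagonal.mem_antidiagonal] at hi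
  rw [hφ i.1 (by omega), hψ i.2 (by omega)]

theorem coeff_mul_pow_eq_zero {G : A⟦X⟧} (hG : constantCoeff G = 0) (φ : A⟦X⟧) {n p : ℕ}
    (h : n < p) : coeff n (φ * G ^ p) = 0 := by
  obtain ⟨G', rfl⟩ := X_dvd_iff.mpr hG
  rw [(commute_X G').symm.mul_pow, ← mul_assoc, (commute_X_pow φ p).eq, mul_assoc,
    coeff_X_pow_mul', if_neg (by omega)]

/-- `∑ₚ (coeff p Φ) * G ^ p`: the outer variable of `Φ` evaluated at `G`. When `G` has zero constant
coefficient only `p ≤ n` contribute to the `n`-th coefficient. -/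
noncomputable def evalCentral (G : A⟦X⟧) (Φ : A⟦X⟧⟦X⟧) : A⟦X⟧ :=
  mk fun n => coeff n (∑ p ∈ range (n + 1), coeff p Φ * G ^ p)

variable {G : A⟦X⟧}

theorem coeff_evalCentral_of_lt (hG : constantCoeff G = 0) (Φ : A⟦X⟧⟦X⟧) {n N : ℕ} (h : n < N) :
    coeff n (evalCentral G Φ) = coeff n (∑ p ∈ range N, coeff p Φ * G ^ p) := by
  rw [evalCentral, coeff_mk, map_sum, map_sum]
  refine sum_subset (range_subset_range.2 h) fun p _ hp => coeff_mul_pow_eq_zero hG _ ?_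
  simpa using hp

theorem evalCentral_mul (hG : constantCoeff G = 0) (hGc : ∀ φ, Commute G φ) (Φ Ψ : A⟦X⟧⟦X⟧) :
    evalCentral G (Φ * Ψ) = evalCentral G Φ * evalCentral G Ψ := by
  ext n
  set f : ℕ → ℕ → A⟦X⟧ := fun i j => coeff i Φ * coeff j Ψ * G ^ (i + j)
  have hf : ∀ i j, f i j = coeff i Φ * G ^ i * (coeff j Ψ * G ^ j) := fun i j => by
    simp only [f, pow_add, mul_assoc, ((hGc _).pow_left i).eq]
  calc coeff n (evalCentral G (Φ * Ψ))
      = coeff n (∑ m ∈ range (n + 1), ∑ k ∈ range (m + 1), f k (m - k)) := by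
        rw [coeff_evalCentral_of_lt hG _ n.lt_succ_self]
        refine congrArg _ (sum_congr rfl fun m _ => ?_)
        rw [coeff_mul_eq_sum_range, sum_mul]
        exact sum_congr rfl fun k hk => by
          simp only [f]; rw [Nat.add_sub_cancel' (Nat.lt_succ_iff.mp (mem_range.mp hk))]
    _ = coeff n (∑ i ∈ range (n + 1), ∑ j ∈ range (n + 1), f i j) := by
        rw [sum_range_diag_flip, map_sum, map_sum]
        refine sum_congr rfl fun i hi => ?_
        rw [map_sum, map_sum]
        refine sum_subset (range_subset_range.2 (by omega)) fun j _ hj => ?_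
        exact coeff_mul_pow_eq_zero hG _ (by simp at hi hj; omega)
    _ = coeff n ((∑ i ∈ range (n + 1), coeff i Φ * G ^ i) *
          ∑ j ∈ range (n + 1), coeff j Ψ * G ^ j) := by
        simp only [hf, sum_mul_sum]
    _ = coeff n (evalCentral G Φ * evalCentral G Ψ) :=
        coeff_mul_eq_of_coeff_eq (fun k hk => (coeff_evalCentral_of_lt hG _ (by omega)).symm)
          (fun k hk => (coeff_evalCentral_of_lt hG _ (by omega)).symm)

theorem evalCentral_C (hG : constantCoeff G = 0) (φ : A⟦X⟧) : evalCentral G (C φ) = φ := by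
  ext n
  rw [coeff_evalCentral_of_lt hG _ n.lt_succ_self, sum_range_succ', sum_eq_zero fun p _ => by
    rw [coeff_C, if_neg p.succ_ne_zero, zero_mul]]
  simp

theorem evalCentral_X (hG : constantCoeff G = 0) : evalCentral G X = G := by
  ext n
  rw [coeff_evalCentral_of_lt hG _ (by omega : n < n + 2), sum_eq_single 1 (fun p _ hp => by
    rw [coeff_X, if_neg hp, zero_mul]) (by simp)]
  simp

theorem evalCentral_add (Φ Ψ : A⟦X⟧⟦X⟧) :
    evalCentral G (Φ + Ψ) = evalCentral G Φ + evalCentral G Ψ := by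
  ext n
  simp [evalCentral, add_mul, sum_add_distrib]

noncomputable def evalCentralHom (G : A⟦X⟧) (hG : constantCoeff G = 0)
    (hGc : ∀ φ, Commute G φ) : A⟦X⟧⟦X⟧ →+* A⟦X⟧ where
  toFun := evalCentral G
  map_one' := evalCentral_C hG 1
  map_mul' := evalCentral_mul hG hGc
  map_zero' := by simpa using evalCentral_C hG 0
  map_add' := evalCentral_add

@[simp]
theorem evalCentralHom_apply (hG : constantCoeff G = 0) (hGc : ∀ φ, Commute G φ)
    (Φ : A⟦X⟧⟦X⟧) : evalCentralHom G hG hGc Φ = evalCentral G Φ := rfl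

end CentralEvaluation

section InvAdd

variable {R : Type*} [CommRing R]

/-- The expansion of `(u + q)⁻¹ = x / (1 + q x)` in `x = u⁻¹`. -/
noncomputable def invAdd (q : R) : R⟦X⟧ := X * rescale (-q) (mk 1)

theorem constantCoeff_invAdd (q : R) : constantCoeff (invAdd q) = 0 := by
  simp [invAdd]

theorem invAdd_sub_invAdd (q q' : R) :
    invAdd q - invAdd q' = C (q' - q) * (invAdd q * invAdd q') := by
  have geom (q : R) : rescale (-q) (mk 1) * (1 + C q * X) = 1 := by
    simpa [sub_eq_add_neg] using congrArg (rescale (-q)) (mk_one_mul_one_sub_eq_one R)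
  have h := geom q
  have h' := geom q'
  simp only [invAdd, map_sub]
  linear_combination (X * rescale (-q') (mk 1)) * h - (X * rescale (-q) (mk 1)) * h'

theorem coeff_invAdd_pow (q : R) {n r : ℕ} (h : r ≤ n) :
    coeff n (invAdd q ^ r) = (-1) ^ (n - r) * ((n - 1).choose (n - r) : R) * q ^ (n - r) := by
  rw [invAdd, mul_pow, ← map_pow, coeff_X_pow_mul', if_pos h, coeff_rescale, neg_pow]
  rcases r with _ | d
  · rcases n with _ | n
    · simp
    · simp [coeff_one]
  · rw [mk_one_pow_eq_mk_choose_add, coeff_mk, show d + (n - (d + 1)) = n - 1 by omega,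
      Nat.choose_symm_of_eq_add (show n - 1 = d + (n - (d + 1)) by omega)]
    ring

end InvAdd

section Shift

theorem commute_map_algebraMap {R A : Type*} [CommRing R] [Ring A] [Algebra R A] (g : R⟦X⟧)
    (φ : A⟦X⟧) : Commute (map (algebraMap R A) g) φ :=
  commute_of_coeff_commute (fun n a => by rw [coeff_map]; exact Algebra.commutes _ a) φ

variable {A : Type*} [Ring A] [Algebra ℚ A]

theorem constantCoeff_map_invAdd (q : ℚ) :
    constantCoeff (map (algebraMap ℚ A) (invAdd q)) = 0 := by
  rw [← coeff_zero_eq_constantCoeff_apply, coeff_map, coeff_zero_eq_constantCoeff_apply,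
    constantCoeff_invAdd, map_zero]

noncomputable def shiftEval (q : ℚ) : A⟦X⟧⟦X⟧ →+* A⟦X⟧ :=
  evalCentralHom (map (algebraMap ℚ A) (invAdd q)) (constantCoeff_map_invAdd q)
    (commute_map_algebraMap _)

/-- The substitution `u ↦ u + q`. -/
noncomputable def shift (q : ℚ) : A⟦X⟧ →+* A⟦X⟧ := (shiftEval q).comp (map C)

theorem shiftEval_C (q : ℚ) (φ : A⟦X⟧) : shiftEval q (C φ) = φ :=
  evalCentral_C (constantCoeff_map_invAdd q) φ

theorem shiftEval_X (q : ℚ) : shiftEval q X = map (algebraMap ℚ A) (invAdd q) :=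
  evalCentral_X (constantCoeff_map_invAdd q)

theorem shift_C (q : ℚ) (a : A) : shift q (C a) = C a := by
  rw [shift, RingHom.comp_apply, map_C, shiftEval_C]

theorem shift_X (q : ℚ) : shift q (X : A⟦X⟧) = map (algebraMap ℚ A) (invAdd q) := by
  rw [shift, RingHom.comp_apply, map_X, shiftEval_X]

theorem shift_mk (q : ℚ) (g : ℕ → A) : shift q (mk g) = mk (shiftC q g) := by
  ext n
  rw [shift, RingHom.comp_apply, shiftEval, evalCentralHom_apply,
    coeff_evalCentral_of_lt (constantCoeff_map_invAdd q) _ n.lt_succ_self, map_sum, coeff_mk,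
    shiftC]
  refine sum_congr rfl fun r hr => ?_
  rw [coeff_map, coeff_mk, ← map_pow, coeff_C_mul, coeff_map,
    coeff_invAdd_pow q (Nat.lt_succ_iff.mp (mem_range.mp hr)), ← Algebra.commutes,
    ← Algebra.smul_def]

theorem shift_zero_apply (φ : A⟦X⟧) : shift 0 φ = φ := by
  have h := shift_mk 0 fun n => coeff n φ
  rwa [shiftC_zero, show mk (fun n => coeff n φ) = φ from ext fun n => coeff_mk _ _] at h

end Shift

section Commutator

variable {A : Type*} [Ring A] [Algebra ℚ A]

theorem shift_commutator {P : A⟦X⟧} {E : ℕ → A} (q q' : ℚ)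
    (hrel : ∀ k, P * C (E k) - C (E k) * P = -(P * shift q' (X * mk fun i => E (i + k)))) :
    (q' - q) • (P * shift q (X * mk E) - shift q (X * mk E) * P)
      = P * (shift q' (X * mk E) - shift q (X * mk E)) := by
  set G := map (algebraMap ℚ A) (invAdd q)
  set G' := map (algebraMap ℚ A) (invAdd q')
  set T : ℕ → A⟦X⟧ := fun k => shift q' (mk fun i => E (i + k)) with hT
  have hTsucc : ∀ k, T k = C (E k) + G' * T (k + 1) := by
    intro k
    have : (mk fun i => E (i + k)) = C (E k) + X * mk fun i => E (i + (k + 1)) := by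
      ext (_ | i) <;> simp [coeff_succ_X_mul]
      ring_nf
    simp only [hT, this, map_add, map_mul, shift_C, shift_X, G']
  -- `mk T` and `mk fun k => C (E k)` live in a second variable; evaluating it at `G` turns the
  -- termwise identities `hA`, `hB` into identities in `A⟦X⟧`.
  have hA : C P * mk (fun k => C (E k)) - mk (fun k => C (E k)) * C P
      = -(C (P * G') * mk T) := by
    ext k : 1
    rw [map_sub, coeff_C_mul, coeff_mul_C, coeff_mk, map_neg, coeff_C_mul, coeff_mk, hrel,
      map_mul, shift_X, mul_assoc]
  have hB : (X - C G') * mk T = X * mk (fun k => C (E k)) - C (G' * T 0) := by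
    ext (_ | k) : 1
    · simp
    · simp [sub_mul, coeff_succ_X_mul, coeff_C_mul, hTsucc k]
  have hS : shiftEval q (mk fun k => C (E k)) = shift q (mk E) := by
    rw [shift, RingHom.comp_apply]
    congr 1
  have hA' := congrArg (shiftEval q) hA
  have hB' := congrArg (shiftEval q) hB
  simp only [map_sub, map_mul, map_neg, shiftEval_C, shiftEval_X, hS] at hA' hB'
  have hT0 : T 0 = shift q' (mk E) := by simp [hT]
  have hGc : ∀ φ, Commute G φ := commute_map_algebraMap _
  set κ := algebraMap ℚ A⟦X⟧ (q' - q)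
  have hGG' : G - G' = κ * (G * G') := by
    have h := congrArg (map (algebraMap ℚ A)) (invAdd_sub_invAdd q q')
    rwa [map_sub, map_mul, map_mul, map_C, ← algebraMap_apply] at h
  rw [Algebra.smul_def, map_mul, map_mul, shift_X, shift_X]
  set S := shift q (mk E)
  set 𝒯 := shiftEval q (mk T)
  calc κ * (P * (G * S) - G * S * P) = -(P * (κ * (G * G')) * 𝒯) := by
        rw [← mul_assoc P G, ← (hGc P).eq, mul_assoc G, mul_assoc G, ← mul_sub, hA']
        simp only [mul_neg, ← mul_assoc]
        rw [mul_assoc κ G P, (hGc P).eq, ← mul_assoc, Algebra.commutes (q' - q) P]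
    _ = P * (G' * shift q' (mk E) - G * S) := by
        rw [← hGG', mul_assoc, hB', hT0]
        noncomm_ring

end Commutator

section Relations

variable {A : Type*} [Ring A]

theorem mk_convo (a b : ℕ → A) : mk (convo a b) = mk a * mk b := by
  ext n
  simp only [coeff_mk, coeff_mul_eq_sum_range, convo]

theorem mk_mul_C_sub_C_mul_mk_eq_iff {f d : ℕ → A} {a : A} :
    mk f * C a - C a * mk f = mk f * mk d ↔
      ∀ r, f r * a - a * f r = ∑ i ∈ range (r + 1), f i * d (r - i) := by
  rw [← mk_convo, PowerSeries.ext_iff]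
  simp [coeff_mul_C, coeff_C_mul, convo]

theorem mk_eq_one {f : ℕ → A} (h : ∀ n, f n = if n = 0 then 1 else 0) : mk f = 1 := by
  ext n
  simp [h, coeff_one]

theorem mk_dd_of_ne_zero (e : ℕ → A) {s : ℕ} (hs : s ≠ 0) :
    mk (fun j => dd e j s) = -(X * mk fun i => e (i + s)) := by
  ext (_ | i)
  · simp [dd]
  · simp [dd, hs, coeff_succ_X_mul]

theorem mk_dd_zero (e : ℕ → A) : mk (fun j => dd e j 0) = 0 := by
  ext
  simp [dd]

variable [Algebra ℚ A]

theorem shift_commutator_C {H D : A⟦X⟧} {a : A} (q : ℚ) (h : H * C a - C a * H = H * D) :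
    shift q H * C a - C a * shift q H = shift q H * shift q D := by
  have h' := congrArg (shift q) h
  rwa [map_sub, map_mul, map_mul, map_mul, shift_C] at h'

theorem shift_dd_intertwine {H : A⟦X⟧} {e : ℕ → A}
    (hrel : ∀ k, H * C (e k) - C (e k) * H = H * mk fun j => dd e j k) (s : ℕ) :
    shift (-1) H * (shift (-(1 / 2)) (mk fun j => dd e j s) - shift (-1) (mk fun j => dd e j s))
      = (mk (fun j => dd e j s) - shift (-(1 / 2)) (mk fun j => dd e j s)) * shift (-1) H := by
  rcases eq_or_ne s 0 with rfl | hs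
  · simp [mk_dd_zero]
  have hP : ∀ k, shift (-1) H * C (e (k + s)) - C (e (k + s)) * shift (-1) H
      = -(shift (-1) H * shift (-1) (X * mk fun i => e (i + k + s))) := fun k => by
    rw [shift_commutator_C (-1) (hrel (k + s)), mk_dd_of_ne_zero e (by omega), map_neg, mul_neg]
    simp only [add_assoc]
  have h₀ := shift_commutator (E := fun k => e (k + s)) 0 (-1) hP
  have h₁ := shift_commutator (E := fun k => e (k + s)) (-(1 / 2)) (-1) hP
  rw [shift_zero_apply] at h₀
  rw [mk_dd_of_ne_zero e hs, map_neg, map_neg]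
  simp only [mul_sub, sub_mul, mul_neg, neg_mul, smul_sub] at h₀ h₁ ⊢
  linear_combination (norm := module) h₀ - (2 : ℚ) • h₁

end Relations

end PowerSeries

/-- `hm1inv` encodes `h₁(u-1)^{-1}`, and `(e(u-1/2)-e(v))/(u-v-1/2)` is the substitution
`u ↦ u - 1/2` (in the first variable) of `(e(u)-e(v))/(u-v)`. -/
theorem stmt3_general {A : Type*} [Ring A] [Algebra ℚ A]
    (h1 e z hm1inv h2 : ℕ → A)
    (hzc : ∀ n a, z n * a = a * z n)
    (hinv1 : ∀ n, convo (shiftC (-1) h1) hm1inv n = if n = 0 then 1 else 0)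
    (hinv2 : ∀ n, convo hm1inv (shiftC (-1) h1) n = if n = 0 then 1 else 0)
    (hh2 : ∀ n, h2 n = convo z (convo (shiftC (-(1 / 2)) h1) hm1inv) n)
    (rel : ∀ r s, h1 r * e s - e s * h1 r
      = ∑ i ∈ range (r + 1), h1 i * dd e (r - i) s) :
    ∀ r s, h2 r * e s - e s * h2 r
      = ∑ i ∈ range (r + 1), h2 i *
          (dd e (r - i) s - shiftC (-(1 / 2)) (fun a => dd e a s) (r - i)) := by
  intro r s
  set H := PowerSeries.mk h1
  set Z := PowerSeries.mk z
  set M := PowerSeries.mk hm1inv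
  have hrel : ∀ k, H * C (e k) - C (e k) * H = H * PowerSeries.mk fun j => dd e j k := fun k =>
    mk_mul_C_sub_C_mul_mk_eq_iff.mpr fun r => rel r k
  have hHM : shift (-1) H * M = 1 := by rw [shift_mk, ← mk_convo, mk_eq_one hinv1]
  have hMH : M * shift (-1) H = 1 := by rw [shift_mk, ← mk_convo, mk_eq_one hinv2]
  have hZ : ∀ φ, Commute Z φ :=
    commute_of_coeff_commute fun n a => by rw [coeff_mk]; exact hzc n a
  have hh2' : PowerSeries.mk h2 = Z * (shift (-(1 / 2)) H * M) := by
    rw [shift_mk, ← mk_convo, ← mk_convo]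
    exact congrArg _ (funext hh2)
  have hconj := commutator_mul_inv_eq hHM hMH (shift_commutator_C (-(1 / 2)) (hrel s))
    (shift_commutator_C (-1) (hrel s)) (shift_dd_intertwine hrel s)
  refine (mk_mul_C_sub_C_mul_mk_eq_iff (f := h2) (a := e s)
    (d := fun j => dd e j s - shiftC (-(1 / 2)) (fun a => dd e a s) j)).mp ?_ r
  set W := shift (-(1 / 2)) H * M
  rw [hh2', mul_assoc Z W, ← mul_assoc (C (e s)) Z W, ← (hZ (C (e s))).eq,
    mul_assoc Z (C (e s)) W, ← mul_sub, hconj, ← mul_assoc, shift_mk]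
  congr 1

/-- If `h₁(u)` and `e(u)` satisfy
`[h₁(u), e(v)] = h₁(u)(e(u)-e(v))/(u-v)` and
`h₂(u) = z(u)·h₁(u-1/2)·h₁(u-1)^{-1}` with `z(u)` having central coefficients, then
`[h₂(u), e(v)] = h₂(u)·((e(u)-e(v))/(u-v) - (e(u-1/2)-e(v))/(u-v-1/2))`.
Here `hm1inv` encodes `h₁(u-1)^{-1}` and `(e(u-1/2)-e(v))/(u-v-1/2)` is the
substitution `u ↦ u - 1/2` (in the first variable) of `(e(u)-e(v))/(u-v)`. -/
theorem stmt3 {A : Type*} [Ring A] [Algebra ℚ A]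
    (h1 e z hm1inv h2 : ℕ → A)
    (hh0 : h1 0 = 1) (he0 : e 0 = 0) (hz0 : z 0 = 1)
    (hzc : ∀ n a, z n * a = a * z n)
    (hinv1 : ∀ n, convo (shiftC (-1) h1) hm1inv n = if n = 0 then 1 else 0)
    (hinv2 : ∀ n, convo hm1inv (shiftC (-1) h1) n = if n = 0 then 1 else 0)
    (hh2 : ∀ n, h2 n = convo z (convo (shiftC (-(1 / 2)) h1) hm1inv) n)
    (rel : ∀ r s, h1 r * e s - e s * h1 r
      = ∑ i ∈ range (r + 1), h1 i * dd e (r - i) s) :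
    ∀ r s, h2 r * e s - e s * h2 r
      = ∑ i ∈ range (r + 1), h2 i *
          (dd e (r - i) s - shiftC (-(1 / 2)) (fun a => dd e a s) (r - i)) :=
  stmt3_general h1 e z hm1inv h2 hzc hinv1 hinv2 hh2 rel
end

section
/- Let A be an associative superalgebra and let e(u) = Σ_{r≥1} e^{(r)} u^{-r} be a formal series of odd elements, and e₁₁'(u) = Σ_{r≥1} e₁₁'^{(r)} u^{-r} a series of even elements, satisfying the relation e₁₁'(u) - e₁₁'(v) = ((u-v+1/2)(u-v-1)/(u-v))·e(u)e(v) + ((u-v-1/2)(u-v+1)/(u-v))·e(v)e(u) - ((u-v-1/2)/(u-v))·e(u)² + ((u-v+1/2)/(u-v))·e(v)². Then by taking the coefficient of v⁰ one obtains e₁₁'(u) = -e(u)² - [e^{(1)}, e(u)], where [a,b] = ab - ba·(-1)^{p(a)p(b)} is the supercommutator (here [e^{(1)},e(u)] = e^{(1)}e(u) + e(u)e^{(1)}). -/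
open Finset

/-- Coefficient of `u^{-r}v^{-s}` in `(u - v)·X(u,v)`. -/
noncomputable def mulw {A : Type*} [Ring A] (X : ℕ → ℕ → A) (r s : ℕ) : A :=
  X (r + 1) s - X r (s + 1)

/-- Coefficient of `u^{-r}v^{-s}` in `(1/(u - v))·X(u,v)`, expanding
`1/(u-v) = Σ_{k≥0} v^k u^{-k-1}`. -/
noncomputable def divw {A : Type*} [Ring A] (X : ℕ → ℕ → A) (r s : ℕ) : A :=
  ∑ k ∈ range r, X (r - 1 - k) (s + k)

/-
Compare coefficients of `u^{-(n+1)} v⁰`. Since `e^{(0)} = 0`, the polynomial parts of the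
prefactors contribute `-e^{(n+1)}e^{(1)} - e^{(1)}e^{(n+1)} - (e(u)²)^{(n+1)}`, while each of the
four `1/(u-v)` tails contributes `±½ (e(u)²)^{(n)}`, and these cancel in pairs.
-/

section CoefficientExtraction

variable {A : Type*} [Ring A]

theorem divw_mul_succ_zero (f g : ℕ → A) (n : ℕ) :
    divw (fun a b => f a * g b) (n + 1) 0 = convo f g n := by
  rw [divw, convo, ← sum_range_reflect]
  refine sum_congr rfl fun k hk => ?_
  rw [mem_range] at hk
  congr 2 <;> omega

theorem divw_mul_swap_succ_zero (f g : ℕ → A) (n : ℕ) :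
    divw (fun a b => g b * f a) (n + 1) 0 = convo g f n := by
  simp only [divw, convo, zero_add, Nat.add_sub_cancel]

theorem divw_ite_right_succ_zero (c : ℕ → A) (n : ℕ) :
    divw (fun a b => if b = 0 then c a else 0) (n + 1) 0 = c n := by
  simp [divw]

theorem divw_ite_left_succ_zero (c : ℕ → A) (n : ℕ) :
    divw (fun a b => if a = 0 then c b else 0) (n + 1) 0 = c n := by
  rw [divw, sum_eq_single n (fun k hk hkn => if_neg (by rw [mem_range] at hk; omega))
    (fun hn => absurd (self_mem_range_succ n) hn)]
  simp

end CoefficientExtraction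

/-- Let `e(u) = Σ_{r≥1} e^{(r)} u^{-r}` be a series of odd elements and
`e₁₁'(u) = Σ_{r≥1} e₁₁'^{(r)} u^{-r}` a series of even elements of an associative
superalgebra satisfying
`e₁₁'(u) - e₁₁'(v)
  = ((u-v+1/2)(u-v-1)/(u-v))·e(u)e(v) + ((u-v-1/2)(u-v+1)/(u-v))·e(v)e(u)
    - ((u-v-1/2)/(u-v))·e(u)² + ((u-v+1/2)/(u-v))·e(v)²`.
(The rational prefactors are expanded via `(w+1/2)(w-1)/w = w - 1/2 - (1/2)/w`,
`(w-1/2)(w+1)/w = w + 1/2 - (1/2)/w`, `(w-1/2)/w = 1 - (1/2)/w`,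
`(w+1/2)/w = 1 + (1/2)/w` for `w = u - v`, and coefficients are extracted with
`mulw` and `divw`.)  Then taking the coefficient of `v⁰` yields
`e₁₁'(u) = -e(u)² - [e^{(1)}, e(u)]`, the supercommutator of two odd elements being
the anticommutator. -/
theorem stmt4 {A : Type*} [Ring A] [Algebra ℚ A]
    (e E11 : ℕ → A) (he0 : e 0 = 0) (hE0 : E11 0 = 0)
    (hyp : ∀ r s,
      (if s = 0 then E11 r else 0) - (if r = 0 then E11 s else 0)
        = (mulw (fun a b => e a * e b) r s
            - (1 / 2 : ℚ) • (e r * e s)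
            - (1 / 2 : ℚ) • divw (fun a b => e a * e b) r s)
          + (mulw (fun a b => e b * e a) r s
            + (1 / 2 : ℚ) • (e s * e r)
            - (1 / 2 : ℚ) • divw (fun a b => e b * e a) r s)
          - ((if s = 0 then convo e e r else 0)
            - (1 / 2 : ℚ) • divw (fun a b => if b = 0 then convo e e a else 0) r s)
          + ((if r = 0 then convo e e s else 0)
            + (1 / 2 : ℚ) • divw (fun a b => if a = 0 then convo e e b else 0) r s)) :
    ∀ n, E11 n = -convo e e n - (e 1 * e n + e n * e 1) := by
  rintro (_ | n)
  · simp [hE0, convo, he0]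
  · have h := hyp (n + 1) 0
    simp only [if_pos, if_neg (Nat.succ_ne_zero n), sub_zero, add_zero, mulw, he0, mul_zero,
      zero_mul, smul_zero, divw_mul_succ_zero, divw_mul_swap_succ_zero, divw_ite_right_succ_zero,
      divw_ite_left_succ_zero] at h
    rw [h]
    abel
end
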